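/- Let r > 0, {v₀,v₁,w} a positive oriented orthonormal system, k₀ = √(1+r²)/r, α(t) = √(1+r²) w + r cos(2πt) v₁ + r sin(2πt) v₀, and W₀(t) = t α̇(t), W₁(t) = α̇(t), W₂(t) = √(1+r²) v₁ + r cos(2πt) w, W₃(t) = √(1+r²) v₀ + r sin(2πt) w. Then the initial values are: W₀(0) = 0, D_tW₀(0) = 2πr v₀; W₁(0) = 2πr v₀, D_tW₁(0) = −4π²r³k₀(k₀v₁ + w); W₂(0) = rk₀v₁ + rw, D_tW₂(0) = 0; W₃(0) = rk₀v₀, D_tW₃(0) = −2πr³(k₀v₁ + w); and the four pairs (Wᵢ(0), D_tWᵢ(0)), i = 0,1,2,3, are linearly independent in ℝ³ × ℝ³ (hence form a basis of the product of the tangent plane of ℍ at α(0) with itself). -/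

import Mathlib

/-!
The curve `α` and the fields `W₂`, `W₃` all have the form `c + cos (2πt) a + sin (2πt) b`, a
family closed under differentiation, so their values and derivatives at `t = 0` are explicit; the
covariant derivatives then follow from the Minkowski relations of the frame and from
`√(1 + r²)² = 1 + r²`, i.e. `α 0 ∈ ℍ`. For the independence, pair first components with `v₀, v₁`
and second components with `v₀, w`: the four pairs go to the rows of a `4 × 4` matrix with
determinant `8π³r⁶k₀(1 - k₀²)`, which is nonzero since `k₀² = 1 + 1/r² > 1`.
-/

noncomputable section

open Real

/-- The Minkowski inner product on ℝ³. -/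
def mink (v w : Fin 3 → ℝ) : ℝ := v 0 * w 0 + v 1 * w 1 - v 2 * w 2

/-- The twisted cross product on ℝ³. -/
def mcross (v w : Fin 3 → ℝ) : Fin 3 → ℝ :=
  ![v 2 * w 1 - v 1 * w 2, v 0 * w 2 - v 2 * w 0, v 0 * w 1 - v 1 * w 0]

/-- A positive oriented orthonormal system with respect to the Minkowski metric. -/
def posOrth (v₀ v₁ w : Fin 3 → ℝ) : Prop :=
  mink v₀ v₁ = 0 ∧ mink v₀ w = 0 ∧ mink v₁ w = 0 ∧
  mink v₀ v₀ = 1 ∧ mink v₁ v₁ = 1 ∧ mink w w = -1 ∧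
  mcross v₀ v₁ = w

/-- Membership in the hyperbolic plane ℍ ⊂ ℝ³. -/
def inH (x : Fin 3 → ℝ) : Prop := x 2 ^ 2 - x 0 ^ 2 - x 1 ^ 2 = 1 ∧ 0 < x 2

/-- The covariant derivative on ℍ of a tangent vector field `V` along a curve `γ` in ℍ:
`D_t V(t) = V̇(t) + ⟨V̇(t), γ(t)⟩ₘ γ(t)`. -/
def covDt (γ V : ℝ → Fin 3 → ℝ) : ℝ → Fin 3 → ℝ :=
  fun t => deriv V t + mink (deriv V t) (γ t) • γ t

lemma mink_comm (u v : Fin 3 → ℝ) : mink u v = mink v u := by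
  simp only [mink]; ring

lemma mink_add_left (u v x : Fin 3 → ℝ) : mink (u + v) x = mink u x + mink v x := by
  simp only [mink, Pi.add_apply]; ring

lemma mink_add_right (u v x : Fin 3 → ℝ) : mink x (u + v) = mink x u + mink x v := by
  simp only [mink, Pi.add_apply]; ring

lemma mink_smul_left (c : ℝ) (u x : Fin 3 → ℝ) : mink (c • u) x = c * mink u x := by
  simp only [mink, Pi.smul_apply, smul_eq_mul]; ring

lemma mink_smul_right (c : ℝ) (u x : Fin 3 → ℝ) : mink x (c • u) = c * mink x u := by
  simp only [mink, Pi.smul_apply, smul_eq_mul]; ring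

lemma mink_neg_left (u x : Fin 3 → ℝ) : mink (-u) x = -mink u x := by
  simp only [mink, Pi.neg_apply]; ring

@[simp] lemma mink_zero_left (x : Fin 3 → ℝ) : mink 0 x = 0 := by
  simp [mink]

section

variable {E : Type*} [NormedAddCommGroup E] [NormedSpace ℝ E]

def ellipse (c a b : E) (ω t : ℝ) : E := c + cos (ω * t) • a + sin (ω * t) • b

lemma ellipse_zero (c a b : E) (ω : ℝ) : ellipse c a b ω 0 = c + a := by
  simp [ellipse]

lemma hasDerivAt_ellipse (c a b : E) (ω t : ℝ) :
    HasDerivAt (ellipse c a b ω) (ellipse 0 (ω • b) (-ω • a) ω t) t := by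
  have hω : HasDerivAt (fun t : ℝ => ω * t) ω t := by simpa using (hasDerivAt_id t).const_mul ω
  have hcos := ((hasDerivAt_cos (ω * t)).comp t hω).smul_const a
  have hsin := ((hasDerivAt_sin (ω * t)).comp t hω).smul_const b
  convert (hcos.const_add c).add hsin using 1
  · rfl
  · simp only [ellipse]
    module

lemma deriv_ellipse (c a b : E) (ω : ℝ) :
    deriv (ellipse c a b ω) = ellipse 0 (ω • b) (-ω • a) ω :=
  funext fun t => (hasDerivAt_ellipse c a b ω t).deriv

lemma hasDerivAt_ellipse_zero (c a b : E) (ω : ℝ) :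
    HasDerivAt (ellipse c a b ω) (ω • b) 0 := by
  simpa [ellipse_zero] using hasDerivAt_ellipse c a b ω 0

lemma hasDerivAt_deriv_ellipse_zero (c a b : E) (ω : ℝ) :
    HasDerivAt (deriv (ellipse c a b ω)) (-(ω ^ 2) • a) 0 := by
  rw [deriv_ellipse]
  convert hasDerivAt_ellipse_zero (0 : E) (ω • b) (-ω • a) ω using 1
  module

lemma hasDerivAt_smul_self_zero {f : ℝ → E} (hf : DifferentiableAt ℝ f 0) :
    HasDerivAt (fun t => t • f t) (f 0) 0 :=
  ((hasDerivAt_id (0 : ℝ)).smul hf.hasDerivAt).congr_deriv (by simp)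

end

lemma HasDerivAt.covDt_eq {γ V : ℝ → Fin 3 → ℝ} {V' : Fin 3 → ℝ} {t : ℝ}
    (hV : HasDerivAt V V' t) : covDt γ V t = V' + mink V' (γ t) • γ t := by
  rw [covDt, hV.deriv]

lemma HasDerivAt.covDt_eq_zero {γ V : ℝ → Fin 3 → ℝ} {t : ℝ} (hV : HasDerivAt V 0 t) :
    covDt γ V t = 0 := by
  rw [hV.covDt_eq, mink_zero_left, zero_smul, add_zero]

def minkProbe (a b c d : Fin 3 → ℝ) : (Fin 3 → ℝ) × (Fin 3 → ℝ) →ₗ[ℝ] Fin 4 → ℝ where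
  toFun p := ![mink p.1 a, mink p.1 b, mink p.2 c, mink p.2 d]
  map_add' p q := by
    ext i; fin_cases i <;> simp [mink_add_left]
  map_smul' x p := by
    ext i; fin_cases i <;> simp [mink_smul_left]

def hypCircle (r s : ℝ) (v₀ v₁ w : Fin 3 → ℝ) : ℝ → Fin 3 → ℝ :=
  ellipse (s • w) (r • v₁) (r • v₀) (2 * π)

lemma deriv_hypCircle_zero (r s : ℝ) (v₀ v₁ w : Fin 3 → ℝ) :
    deriv (hypCircle r s v₀ v₁ w) 0 = (2 * π * r) • v₀ := by
  rw [mul_smul]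
  exact (hasDerivAt_ellipse_zero (s • w) (r • v₁) (r • v₀) (2 * π)).deriv

namespace posOrth

variable {v₀ v₁ w : Fin 3 → ℝ}

lemma covDt_hypCircle_smul_deriv (hsys : posOrth v₀ v₁ w) (r s : ℝ) :
    covDt (hypCircle r s v₀ v₁ w) (fun t => t • deriv (hypCircle r s v₀ v₁ w) t) 0 =
      (2 * π * r) • v₀ := by
  obtain ⟨h01, h0w, -⟩ := hsys
  have hV : DifferentiableAt ℝ (deriv (hypCircle r s v₀ v₁ w)) 0 :=
    (hasDerivAt_deriv_ellipse_zero (s • w) (r • v₁) (r • v₀) (2 * π)).differentiableAt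
  rw [(hasDerivAt_smul_self_zero hV).covDt_eq, deriv_hypCircle_zero, hypCircle,
    ellipse_zero]
  simp [mink_smul_left, mink_add_right, mink_smul_right, h0w, h01]

lemma covDt_hypCircle_deriv (hsys : posOrth v₀ v₁ w) {r s : ℝ} (hr : r ≠ 0)
    (hs : s ^ 2 = 1 + r ^ 2) :
    covDt (hypCircle r s v₀ v₁ w) (deriv (hypCircle r s v₀ v₁ w)) 0 =
      (-(4 * π ^ 2 * r ^ 3 * (s / r))) • ((s / r) • v₁ + w) := by
  obtain ⟨-, -, h1w, -, h11, -⟩ := hsys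
  rw [hypCircle, (hasDerivAt_deriv_ellipse_zero (s • w) (r • v₁) (r • v₀) (2 * π)).covDt_eq,
    ellipse_zero]
  simp only [mink_smul_left, mink_add_right, mink_smul_right, h1w, h11]
  match_scalars
  · field_simp
    linear_combination 4 * hs
  · field_simp
    ring

lemma covDt_hypCircle_ellipse_sin (hsys : posOrth v₀ v₁ w) {r s : ℝ} (hr : r ≠ 0)
    (hs : s ^ 2 = 1 + r ^ 2) :
    covDt (hypCircle r s v₀ v₁ w) (ellipse (s • v₀) 0 (r • w) (2 * π)) 0 =
      (-(2 * π * r ^ 3)) • ((s / r) • v₁ + w) := by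
  obtain ⟨-, -, h1w, -, -, hww, -⟩ := hsys
  rw [hypCircle, (hasDerivAt_ellipse_zero (s • v₀) 0 (r • w) (2 * π)).covDt_eq, ellipse_zero]
  simp only [mink_smul_left, mink_add_right, mink_smul_right, hww, mink_comm w v₁, h1w]
  match_scalars
  · field_simp
    linear_combination (-1) * hs
  · field_simp
    ring

lemma linearIndependent_pairs (hsys : posOrth v₀ v₁ w) {r k : ℝ}
    (hr : r ≠ 0) (hk : k ≠ 0) (hk1 : k ^ 2 ≠ 1) :
    LinearIndependent ℝ
      ![((0 : Fin 3 → ℝ), (2 * π * r) • v₀),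
        ((2 * π * r) • v₀, (-(4 * π ^ 2 * r ^ 3 * k)) • (k • v₁ + w)),
        ((r * k) • v₁ + r • w, 0),
        ((r * k) • v₀, (-(2 * π * r ^ 3)) • (k • v₁ + w))] := by
  obtain ⟨h01, h0w, h1w, h00, h11, hww, -⟩ := hsys
  set M : Matrix (Fin 4) (Fin 4) ℝ := !![0, 0, 2 * π * r, 0;
      2 * π * r, 0, 0, 4 * π ^ 2 * r ^ 3 * k;
      0, r * k, 0, 0;
      r * k, 0, 0, 2 * π * r ^ 3]
  have hdet : M.det = 8 * π ^ 3 * r ^ 6 * k * (1 - k ^ 2) := by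
    rw [Matrix.det_succ_row_zero]
    simp [M, Fin.sum_univ_succ, Matrix.det_fin_three, Fin.succAbove]
    ring
  have hM : LinearIndependent ℝ fun i => M i := by
    refine Matrix.linearIndependent_rows_of_det_ne_zero ?_
    rw [hdet]
    simp [hr, hk, pi_ne_zero, sub_eq_zero, Ne.symm hk1]
  refine LinearIndependent.of_comp (minkProbe v₀ v₁ v₀ w) ?_
  convert hM using 1
  ext i j
  fin_cases i <;> fin_cases j <;>
    simp [M, minkProbe, mink_add_left, mink_neg_left, mink_smul_left,
      mink_comm v₁ v₀, mink_comm w v₀, mink_comm w v₁, h01, h0w, h1w, h00, h11, hww]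

end posOrth

/-- the initial values of W₀, W₁, W₂, W₃ and their covariant derivatives,
and the linear independence of the four pairs of initial values. -/
theorem stmt_10 (r : ℝ) (hr : 0 < r) (v₀ v₁ w : Fin 3 → ℝ) (hsys : posOrth v₀ v₁ w) :
    let k₀ : ℝ := Real.sqrt (1 + r ^ 2) / r
    let α : ℝ → Fin 3 → ℝ := fun t =>
      Real.sqrt (1 + r ^ 2) • w + (r * Real.cos (2 * Real.pi * t)) • v₁ +
        (r * Real.sin (2 * Real.pi * t)) • v₀
    let W₀ : ℝ → Fin 3 → ℝ := fun t => t • deriv α t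
    let W₁ : ℝ → Fin 3 → ℝ := fun t => deriv α t
    let W₂ : ℝ → Fin 3 → ℝ := fun t =>
      Real.sqrt (1 + r ^ 2) • v₁ + (r * Real.cos (2 * Real.pi * t)) • w
    let W₃ : ℝ → Fin 3 → ℝ := fun t =>
      Real.sqrt (1 + r ^ 2) • v₀ + (r * Real.sin (2 * Real.pi * t)) • w
    W₀ 0 = 0 ∧ covDt α W₀ 0 = (2 * Real.pi * r) • v₀ ∧
    W₁ 0 = (2 * Real.pi * r) • v₀ ∧
    covDt α W₁ 0 = (-(4 * Real.pi ^ 2 * r ^ 3 * k₀)) • (k₀ • v₁ + w) ∧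
    W₂ 0 = (r * k₀) • v₁ + r • w ∧ covDt α W₂ 0 = 0 ∧
    W₃ 0 = (r * k₀) • v₀ ∧
    covDt α W₃ 0 = (-(2 * Real.pi * r ^ 3)) • (k₀ • v₁ + w) ∧
    LinearIndependent ℝ
      ![((W₀ 0, covDt α W₀ 0) : (Fin 3 → ℝ) × (Fin 3 → ℝ)),
        (W₁ 0, covDt α W₁ 0), (W₂ 0, covDt α W₂ 0), (W₃ 0, covDt α W₃ 0)] := by
  intro k₀ α W₀ W₁ W₂ W₃
  set s := √(1 + r ^ 2)
  have hs : s ^ 2 = 1 + r ^ 2 := sq_sqrt (by positivity)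
  have hrk : r * k₀ = s := mul_div_cancel₀ s hr.ne'
  have hα : α = hypCircle r s v₀ v₁ w := by
    funext t; simp only [α, hypCircle, ellipse]; module
  have hW₂ : W₂ = ellipse (s • v₁) (r • w) 0 (2 * π) := by
    funext t; simp only [W₂, ellipse]; module
  have hW₃ : W₃ = ellipse (s • v₀) 0 (r • w) (2 * π) := by
    funext t; simp only [W₃, ellipse]; module
  have c0 : W₀ 0 = 0 := zero_smul ℝ _
  have c1 : W₁ 0 = (2 * π * r) • v₀ := by
    simp only [W₁, hα]; exact deriv_hypCircle_zero r s v₀ v₁ w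
  have c2 : W₂ 0 = (r * k₀) • v₁ + r • w := by rw [hW₂, ellipse_zero, hrk]
  have c3 : W₃ 0 = (r * k₀) • v₀ := by rw [hW₃, ellipse_zero, hrk, add_zero]
  have d0 : covDt α W₀ 0 = (2 * π * r) • v₀ := by
    simp only [W₀, hα]; exact hsys.covDt_hypCircle_smul_deriv r s
  have d1 : covDt α W₁ 0 = (-(4 * π ^ 2 * r ^ 3 * k₀)) • (k₀ • v₁ + w) := by
    simp only [W₁, hα]; exact hsys.covDt_hypCircle_deriv hr.ne' hs
  have d2 : covDt α W₂ 0 = 0 := by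
    rw [hW₂]
    exact HasDerivAt.covDt_eq_zero (by simpa using hasDerivAt_ellipse_zero (s • v₁) (r • w) 0 _)
  have d3 : covDt α W₃ 0 = (-(2 * π * r ^ 3)) • (k₀ • v₁ + w) := by
    rw [hW₃, hα]; exact hsys.covDt_hypCircle_ellipse_sin hr.ne' hs
  refine ⟨c0, d0, c1, d1, c2, d2, c3, d3, ?_⟩
  rw [c0, d0, c1, d1, c2, d2, c3, d3]
  refine hsys.linearIndependent_pairs hr.ne' (by positivity) ?_
  rw [div_pow, hs, Ne, div_eq_one_iff_eq (by positivity)]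
  linarith
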